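/- arXiv:math/0508619 — 5 statements merged into one kernel-verified Lean document; each statement's English description precedes it below -/
import Mathlib

section
/- For all positive reals a, b, c, d: (d/b - c/a)(b - a) ≤ -((min(c,d))/2)(log b - log a)² + (d-c)²/(2 min(c,d)). -/
private lemma sq_log_le_aux (x : ℝ) (hx : 1 ≤ x) : (Real.log x)^2 ≤ x + 1/x - 2 := by
  have hx0 : (0:ℝ) < x := by linarith
  set t := Real.log x / 2 with ht
  have ht0 : 0 ≤ t := by
    have := Real.log_nonneg hx
    rw [ht]; linarith
  have hsinh : t ≤ Real.sinh t := Real.self_le_sinh_iff.mpr ht0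
  have hsd : Real.sinh t = (Real.exp t - Real.exp (-t)) / 2 := Real.sinh_eq t
  set E := Real.exp t with hE
  set F := Real.exp (-t) with hF
  have hEF : E * F = 1 := by rw [hE, hF, ← Real.exp_add]; simp
  have hEE : E * E = x := by
    rw [hE, ← Real.exp_add, ht]
    rw [show Real.log x / 2 + Real.log x / 2 = Real.log x by ring]
    exact Real.exp_log hx0
  have hFF : F * F = 1 / x := by
    rw [hF, ← Real.exp_add]
    rw [show -t + -t = -(Real.log x) by ring, Real.exp_neg, Real.exp_log hx0]
    exact (one_div x).symm
  have h3 : 2 * t ≤ E - F := by rw [hsd] at hsinh; linarith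
  have hlt : Real.log x = 2 * t := by rw [ht]; ring
  rw [hlt]
  nlinarith [h3, ht0, hEE, hFF, hEF, sq_nonneg (E - F - 2*t)]

private lemma sq_log_le (x : ℝ) (hx : 0 < x) : (Real.log x)^2 ≤ x + 1/x - 2 := by
  rcases le_total 1 x with h | h
  · exact sq_log_le_aux x h
  · have hx' : 1 ≤ 1/x := by rw [le_div_iff₀ hx]; linarith
    have := sq_log_le_aux (1/x) hx'
    rw [Real.log_div one_ne_zero hx.ne', Real.log_one] at this
    have h1x : 1 / (1/x) = x := by field_simp
    rw [h1x] at this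
    nlinarith [this]

private lemma main_aux (a b c d : ℝ) (ha : 0 < a) (hb : 0 < b)
    (hc : 0 < c) (hd : 0 < d) (hcd : c ≤ d) :
    (d / b - c / a) * (b - a) ≤
      -(c / 2) * (Real.log b - Real.log a) ^ 2 + (d - c) ^ 2 / (2 * c) := by
  set u := a / b with hu
  set v := b / a with hv
  have hu0 : 0 < u := div_pos ha hb
  have hv0 : 0 < v := div_pos hb ha
  have hL : Real.log b - Real.log a = Real.log v := (Real.log_div hb.ne' ha.ne').symm
  set L := Real.log v with hLdef
  have huv : u = 1 / v := by rw [hu, hv]; field_simp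
  have key1 : L^2 ≤ v + u - 2 := by
    rw [huv]; have := sq_log_le v hv0; linarith
  have hlhs : (d / b - c / a) * (b - a) = c + d - d*u - c*v := by
    rw [hu, hv]; field_simp; ring
  have key2 : (d - c) * (1 - u) ≤ (d - c)^2 / (2*c) + c * L^2 / 2 := by
    rcases le_total b a with hba | hab
    · have h1 : 1 - u ≤ 0 := by
        rw [hu, sub_nonpos, le_div_iff₀ hb]; linarith
      have : (d - c) * (1 - u) ≤ 0 := mul_nonpos_of_nonneg_of_nonpos (by linarith) h1
      have h2 : 0 ≤ (d - c)^2 / (2*c) := by positivity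
      nlinarith [sq_nonneg L]
    · have h1 : 1 - u ≤ L := by
        have := Real.log_le_sub_one_of_pos hu0
        have hlu : Real.log u = -L := by
          rw [huv, Real.log_div one_ne_zero hv0.ne', Real.log_one]; ring
        rw [hlu] at this; linarith
      have hL0 : 0 ≤ L := by
        apply Real.log_nonneg
        rw [hv, le_div_iff₀ ha]; linarith
      have h2 : (d - c) * (1 - u) ≤ (d - c) * L :=
        mul_le_mul_of_nonneg_left h1 (by linarith)
      have h3 : (d - c) * L ≤ (d - c)^2 / (2*c) + c * L^2 / 2 := by
        rw [div_add' _ _ _ (by positivity : (2*c:ℝ) ≠ 0), le_div_iff₀ (by positivity)]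
        nlinarith [sq_nonneg (d - c - c*L)]
      linarith
  rw [hL, hlhs]
  have hck : c * L^2 ≤ c * (v + u - 2) := mul_le_mul_of_nonneg_left key1 hc.le
  linarith [key2, hck]

theorem elementary_log_inequality (a b c d : ℝ) (ha : 0 < a) (hb : 0 < b)
    (hc : 0 < c) (hd : 0 < d) :
    (d / b - c / a) * (b - a) ≤
      -(min c d / 2) * (Real.log b - Real.log a) ^ 2 + (d - c) ^ 2 / (2 * min c d) := by
  rcases le_total c d with h | h
  · rw [min_eq_left h]
    exact main_aux a b c d ha hb hc hd h
  · rw [min_eq_right h]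
    have := main_aux b a d c hb ha hd hc h
    calc (d / b - c / a) * (b - a) = (c / a - d / b) * (a - b) := by ring
      _ ≤ -(d / 2) * (Real.log a - Real.log b) ^ 2 + (c - d) ^ 2 / (2 * d) := this
      _ = -(d / 2) * (Real.log b - Real.log a) ^ 2 + (d - c) ^ 2 / (2 * d) := by ring
end

section
/- Weighted Poincaré inequality on the nonnegative integers with exponential weight: there is a constant c > 0 such that for every function f : ℕ → ℝ, the double sum Σ_{k,ℓ ≥ 0} (f(k) − f(ℓ))² e^{−k} e^{−ℓ} is at most c · Σ_{n ≥ 0} (f(n+1) − f(n))² e^{−n}. -/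
open Real Finset
open scoped ENNReal

/-- Weighted Poincaré inequality on the nonnegative integers with exponential weight. -/
theorem weighted_poincare_nat :
    ∃ c : ℝ, 0 < c ∧ ∀ f : ℕ → ℝ,
      (∑' k : ℕ, ∑' l : ℕ,
          ENNReal.ofReal ((f k - f l) ^ 2 * Real.exp (-(k : ℝ)) * Real.exp (-(l : ℝ))))
        ≤ ENNReal.ofReal c *
            ∑' n : ℕ, ENNReal.ofReal ((f (n + 1) - f n) ^ 2 * Real.exp (-(n : ℝ))) := by
  classical
  -- real constants
  have hx1 : (1:ℝ) < Real.exp (1/2) := by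
    rw [← Real.exp_zero]; exact Real.exp_lt_exp.2 (by norm_num)
  set c1 : ℝ := (Real.exp (1/2) - 1)⁻¹ with hc1def
  have hc1 : 0 < c1 := by rw [hc1def]; exact inv_pos.2 (by linarith)
  set r : ℝ := Real.exp (-(1/2) : ℝ) with hrdef
  have hr0 : 0 < r := Real.exp_pos _
  have hr1 : r < 1 := by
    rw [hrdef, ← Real.exp_zero]; exact Real.exp_lt_exp.2 (by norm_num)
  -- ENNReal constants
  set S : ℝ≥0∞ := ∑' k : ℕ, ENNReal.ofReal (Real.exp (-(k : ℝ))) with hSdef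
  have hS_eq : S = (1 - ENNReal.ofReal (Real.exp (-1)))⁻¹ := by
    rw [hSdef, ← ENNReal.tsum_geometric (ENNReal.ofReal (Real.exp (-1)))]
    refine tsum_congr fun k => ?_
    rw [← ENNReal.ofReal_pow (Real.exp_nonneg _), ← Real.exp_nat_mul]
    norm_num
  have hq1 : ENNReal.ofReal (Real.exp (-1)) < 1 := by
    rw [ENNReal.ofReal_lt_one, ← Real.exp_zero]
    exact Real.exp_lt_exp.2 (by norm_num)
  have hS_top : S ≠ ⊤ := by
    rw [hS_eq]
    exact ENNReal.inv_ne_top.2 (tsub_pos_of_lt hq1).ne'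
  have hS_ne : S ≠ 0 := by
    rw [hS_eq]
    exact ENNReal.inv_ne_zero.2 (by simp [ENNReal.sub_ne_top])
  have hR1 : ENNReal.ofReal r < 1 := ENNReal.ofReal_lt_one.2 hr1
  have hR1' : (1 : ℝ≥0∞) - ENNReal.ofReal r ≠ 0 := (tsub_pos_of_lt hR1).ne'
  set C3 : ℝ≥0∞ := ENNReal.ofReal c1 * (ENNReal.ofReal r * (1 - ENNReal.ofReal r)⁻¹)
    with hC3def
  have hC3_top : C3 ≠ ⊤ := by
    rw [hC3def]
    exact ENNReal.mul_ne_top ENNReal.ofReal_ne_top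
      (ENNReal.mul_ne_top ENNReal.ofReal_ne_top (ENNReal.inv_ne_top.2 hR1'))
  have hC3_ne : C3 ≠ 0 := by
    rw [hC3def]
    refine mul_ne_zero (by simp [hc1]) (mul_ne_zero (by simp [hr0]) ?_)
    exact ENNReal.inv_ne_zero.2 (by simp [ENNReal.sub_ne_top])
  have hCtot_top : 4 * S * C3 ≠ ⊤ :=
    ENNReal.mul_ne_top (ENNReal.mul_ne_top (by norm_num) hS_top) hC3_top
  have hCtot_ne : 4 * S * C3 ≠ 0 :=
    mul_ne_zero (mul_ne_zero (by norm_num) hS_ne) hC3_ne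
  refine ⟨(4 * S * C3).toReal, ENNReal.toReal_pos hCtot_ne hCtot_top, fun f => ?_⟩
  rw [ENNReal.ofReal_toReal hCtot_top]
  set g : ℕ → ℝ≥0∞ := fun n => ENNReal.ofReal ((f (n + 1) - f n) ^ 2 * Real.exp (-(n : ℝ)))
    with hgdef
  set T : ℝ≥0∞ := ∑' n, g n with hTdef
  set P : ℕ → ℝ≥0∞ := fun k => ENNReal.ofReal ((f k - f 0) ^ 2 * Real.exp (-(k : ℝ)))
    with hPdef
  set U : ℝ≥0∞ := ∑' k, P k with hUdef
  -- key real inequality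
  have hkey : ∀ k : ℕ, (f k - f 0) ^ 2 * Real.exp (-(k : ℝ)) ≤
      ∑ n ∈ Finset.range k,
        c1 * Real.exp (((n : ℝ) - k) / 2) * ((f (n + 1) - f n) ^ 2 * Real.exp (-(n : ℝ))) := by
    intro k
    have hCS : (f k - f 0) ^ 2 ≤
        (∑ n ∈ Finset.range k, ((f (n + 1) - f n) * Real.exp (-((n : ℝ) / 4))) ^ 2) *
          (∑ n ∈ Finset.range k, (Real.exp ((n : ℝ) / 4)) ^ 2) := by
      have h := Finset.sum_mul_sq_le_sq_mul_sq (Finset.range k)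
        (fun n => (f (n + 1) - f n) * Real.exp (-((n : ℝ) / 4)))
        (fun n => Real.exp ((n : ℝ) / 4))
      have e1 : (∑ n ∈ Finset.range k,
          ((f (n + 1) - f n) * Real.exp (-((n : ℝ) / 4))) * Real.exp ((n : ℝ) / 4))
          = f k - f 0 := by
        rw [show (∑ n ∈ Finset.range k,
            ((f (n + 1) - f n) * Real.exp (-((n : ℝ) / 4))) * Real.exp ((n : ℝ) / 4))
            = ∑ n ∈ Finset.range k, (f (n + 1) - f n) from
          Finset.sum_congr rfl fun n _ => by
            rw [mul_assoc, ← Real.exp_add]; norm_num]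
        exact Finset.sum_range_sub f k
      calc (f k - f 0) ^ 2
          = (∑ n ∈ Finset.range k,
              ((f (n + 1) - f n) * Real.exp (-((n : ℝ) / 4))) * Real.exp ((n : ℝ) / 4)) ^ 2 := by
            rw [e1]
        _ ≤ _ := h
    have hB : (∑ n ∈ Finset.range k, (Real.exp ((n : ℝ) / 4)) ^ 2)
        ≤ c1 * Real.exp (1/2) ^ k := by
      have e2 : ∀ n ∈ Finset.range k, (Real.exp ((n : ℝ) / 4)) ^ 2 = Real.exp (1/2) ^ n := by
        intro n _
        rw [sq, ← Real.exp_add, show (n : ℝ) / 4 + (n : ℝ) / 4 = (n : ℝ) * (1/2) by ring,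
          Real.exp_nat_mul]
      rw [Finset.sum_congr rfl e2, geom_sum_eq (ne_of_gt hx1) k,
        div_le_iff₀ (by linarith)]
      have hinv : c1 * (Real.exp (1/2) - 1) = 1 := inv_mul_cancel₀ (by linarith)
      nlinarith [pow_pos (Real.exp_pos (1/2 : ℝ)) k]
    have hA0 : (0:ℝ) ≤ ∑ n ∈ Finset.range k,
        ((f (n + 1) - f n) * Real.exp (-((n : ℝ) / 4))) ^ 2 :=
      Finset.sum_nonneg fun n _ => sq_nonneg _
    have step : (f k - f 0) ^ 2 * Real.exp (-(k : ℝ)) ≤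
        (∑ n ∈ Finset.range k, ((f (n + 1) - f n) * Real.exp (-((n : ℝ) / 4))) ^ 2) *
          (c1 * Real.exp (-(k : ℝ) / 2)) := by
      have h1 : (f k - f 0) ^ 2 ≤
          (∑ n ∈ Finset.range k, ((f (n + 1) - f n) * Real.exp (-((n : ℝ) / 4))) ^ 2) *
            (c1 * Real.exp (1/2) ^ k) :=
        hCS.trans (mul_le_mul_of_nonneg_left hB hA0)
      have h2 : Real.exp (1/2) ^ k * Real.exp (-(k : ℝ)) = Real.exp (-(k : ℝ) / 2) := by
        rw [← Real.exp_nat_mul, ← Real.exp_add]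
        congr 1; ring
      calc (f k - f 0) ^ 2 * Real.exp (-(k : ℝ))
          ≤ ((∑ n ∈ Finset.range k, ((f (n + 1) - f n) * Real.exp (-((n : ℝ) / 4))) ^ 2) *
              (c1 * Real.exp (1/2) ^ k)) * Real.exp (-(k : ℝ)) :=
            mul_le_mul_of_nonneg_right h1 (Real.exp_nonneg _)
        _ = (∑ n ∈ Finset.range k, ((f (n + 1) - f n) * Real.exp (-((n : ℝ) / 4))) ^ 2) *
              (c1 * Real.exp (-(k : ℝ) / 2)) := by
            rw [← h2]; ring
    refine step.trans (le_of_eq ?_)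
    rw [Finset.sum_mul]
    refine Finset.sum_congr rfl fun n _ => ?_
    have e4 : Real.exp (-((n : ℝ) / 4)) ^ 2 * Real.exp (-(k : ℝ) / 2)
        = Real.exp (((n : ℝ) - k) / 2) * Real.exp (-(n : ℝ)) := by
      rw [sq, ← Real.exp_add, ← Real.exp_add, ← Real.exp_add]; congr 1; ring
    rw [mul_pow]
    linear_combination (c1 * (f (n + 1) - f n) ^ 2) * e4
  -- Step B : U ≤ C3 * T
  set W : ℕ → ℕ → ℝ≥0∞ := fun k n =>
    if n < k then ENNReal.ofReal (c1 * Real.exp (((n : ℝ) - k) / 2)) else 0 with hWdef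
  have hPk : ∀ k, P k ≤ ∑' n, W k n * g n := by
    intro k
    have hz : ∀ n ∉ Finset.range k, W k n * g n = 0 := by
      intro n hn
      have h : ¬ n < k := fun h => hn (Finset.mem_range.2 h)
      simp [hWdef, h]
    rw [tsum_eq_sum hz]
    calc P k ≤ ENNReal.ofReal (∑ n ∈ Finset.range k,
          c1 * Real.exp (((n : ℝ) - k) / 2) * ((f (n + 1) - f n) ^ 2 * Real.exp (-(n : ℝ)))) :=
        ENNReal.ofReal_le_ofReal (hkey k)
      _ = ∑ n ∈ Finset.range k, ENNReal.ofReal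
          (c1 * Real.exp (((n : ℝ) - k) / 2) * ((f (n + 1) - f n) ^ 2 * Real.exp (-(n : ℝ)))) :=
        ENNReal.ofReal_sum_of_nonneg fun n _ => by positivity
      _ = ∑ n ∈ Finset.range k, W k n * g n := by
        refine Finset.sum_congr rfl fun n hn => ?_
        rw [hWdef, hgdef]
        simp only [if_pos (Finset.mem_range.1 hn)]
        rw [ENNReal.ofReal_mul (by positivity)]
  have hWn : ∀ n, (∑' k, W k n) = C3 := by
    intro n
    have hinj : Function.Injective (fun j : ℕ => n + 1 + j) := add_right_injective (n + 1)
    have hsupp : Function.support (fun k => W k n) ⊆ Set.range (fun j : ℕ => n + 1 + j) := by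
      intro k hk
      simp only [Function.mem_support, hWdef] at hk
      have hnk : n < k := by by_contra h; simp [h] at hk
      exact ⟨k - (n + 1), show n + 1 + (k - (n + 1)) = k by omega⟩
    rw [← hinj.tsum_eq hsupp]
    have hval : ∀ j : ℕ, W (n + 1 + j) n
        = ENNReal.ofReal c1 * ENNReal.ofReal r ^ (j + 1) := by
      intro j
      have h1 : n < n + 1 + j := by omega
      have h2 : ((n : ℝ) - (↑(n + 1 + j) : ℝ)) / 2 = (↑(j + 1) : ℝ) * (-(1/2) : ℝ) := by
        push_cast; ring
      rw [hWdef]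
      simp only [if_pos h1]
      rw [h2, Real.exp_nat_mul, ENNReal.ofReal_mul (le_of_lt hc1),
        ENNReal.ofReal_pow (Real.exp_nonneg _), hrdef]
    calc (∑' j : ℕ, W (n + 1 + j) n)
        = ∑' j : ℕ, ENNReal.ofReal c1 * ENNReal.ofReal r ^ (j + 1) := tsum_congr hval
      _ = ENNReal.ofReal c1 * ∑' j : ℕ, ENNReal.ofReal r ^ (j + 1) := ENNReal.tsum_mul_left
      _ = C3 := by rw [ENNReal.tsum_geometric_add_one, hC3def]
  have hU : U ≤ C3 * T := by
    calc U ≤ ∑' k, ∑' n, W k n * g n := ENNReal.tsum_le_tsum hPk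
      _ = ∑' n, ∑' k, W k n * g n := ENNReal.tsum_comm
      _ = ∑' n, (∑' k, W k n) * g n := tsum_congr fun n => ENNReal.tsum_mul_right
      _ = ∑' n, C3 * g n := tsum_congr fun n => by rw [hWn n]
      _ = C3 * T := by rw [ENNReal.tsum_mul_left, hTdef]
  -- Step A : LHS ≤ 4 * (S * U)
  have hpt : ∀ k l : ℕ,
      ENNReal.ofReal ((f k - f l) ^ 2 * Real.exp (-(k : ℝ)) * Real.exp (-(l : ℝ)))
        ≤ 2 * P k * ENNReal.ofReal (Real.exp (-(l : ℝ)))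
          + 2 * ENNReal.ofReal (Real.exp (-(k : ℝ))) * P l := by
    intro k l
    have hre : (f k - f l) ^ 2 * Real.exp (-(k : ℝ)) * Real.exp (-(l : ℝ))
        ≤ (2 * ((f k - f 0) ^ 2 * Real.exp (-(k : ℝ)))) * Real.exp (-(l : ℝ))
          + (2 * Real.exp (-(k : ℝ))) * ((f l - f 0) ^ 2 * Real.exp (-(l : ℝ))) := by
      have hbase : (f k - f l) ^ 2 ≤ 2 * (f k - f 0) ^ 2 + 2 * (f l - f 0) ^ 2 := by
        nlinarith [sq_nonneg (f k + f l - 2 * f 0)]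
      have hek : (0:ℝ) < Real.exp (-(k : ℝ)) := Real.exp_pos _
      have hel : (0:ℝ) < Real.exp (-(l : ℝ)) := Real.exp_pos _
      nlinarith [mul_le_mul_of_nonneg_right
        (mul_le_mul_of_nonneg_right hbase hek.le) hel.le]
    calc ENNReal.ofReal ((f k - f l) ^ 2 * Real.exp (-(k : ℝ)) * Real.exp (-(l : ℝ)))
        ≤ ENNReal.ofReal ((2 * ((f k - f 0) ^ 2 * Real.exp (-(k : ℝ)))) * Real.exp (-(l : ℝ))
            + (2 * Real.exp (-(k : ℝ))) * ((f l - f 0) ^ 2 * Real.exp (-(l : ℝ)))) :=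
          ENNReal.ofReal_le_ofReal hre
      _ = ENNReal.ofReal ((2 * ((f k - f 0) ^ 2 * Real.exp (-(k : ℝ)))) * Real.exp (-(l : ℝ)))
            + ENNReal.ofReal
              ((2 * Real.exp (-(k : ℝ))) * ((f l - f 0) ^ 2 * Real.exp (-(l : ℝ)))) :=
          ENNReal.ofReal_add (by positivity) (by positivity)
      _ = 2 * P k * ENNReal.ofReal (Real.exp (-(l : ℝ)))
            + 2 * ENNReal.ofReal (Real.exp (-(k : ℝ))) * P l := by
          have of2 : ∀ A B : ℝ, 0 ≤ A →
              ENNReal.ofReal ((2 * A) * B) = 2 * ENNReal.ofReal A * ENNReal.ofReal B := by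
            intro A B hA
            rw [mul_assoc, ENNReal.ofReal_mul (by norm_num : (0:ℝ) ≤ 2),
              ENNReal.ofReal_mul hA, ENNReal.ofReal_ofNat, mul_assoc]
          rw [of2 _ _ (by positivity), of2 _ _ (by positivity)]
  calc (∑' k : ℕ, ∑' l : ℕ,
        ENNReal.ofReal ((f k - f l) ^ 2 * Real.exp (-(k : ℝ)) * Real.exp (-(l : ℝ))))
      ≤ ∑' k : ℕ, ∑' l : ℕ, (2 * P k * ENNReal.ofReal (Real.exp (-(l : ℝ)))
          + 2 * ENNReal.ofReal (Real.exp (-(k : ℝ))) * P l) :=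
        ENNReal.tsum_le_tsum fun k => ENNReal.tsum_le_tsum fun l => hpt k l
    _ = ∑' k : ℕ, (2 * P k * S + 2 * ENNReal.ofReal (Real.exp (-(k : ℝ))) * U) := by
        refine tsum_congr fun k => ?_
        rw [ENNReal.tsum_add, ENNReal.tsum_mul_left, ENNReal.tsum_mul_left, hSdef, hUdef]
    _ = ∑' k : ℕ, (2 * S * P k + 2 * U * ENNReal.ofReal (Real.exp (-(k : ℝ)))) := by
        refine tsum_congr fun k => ?_
        ring
    _ = 2 * S * U + 2 * U * S := by
        rw [ENNReal.tsum_add, ENNReal.tsum_mul_left, ENNReal.tsum_mul_left]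
    _ = 4 * S * U := by ring
    _ ≤ 4 * S * (C3 * T) := mul_le_mul_right hU _
    _ = 4 * S * C3 * T := by ring
end

section
/- Weighted Poincaré inequality on ℤ with exponential weight: there is a constant c > 0 such that for every f : ℤ → ℝ, Σ_{k∈ℤ} (f(k) − ⟨f⟩)² e^{−|k|} ≤ c · Σ_{n∈ℤ} (f(n+1) − f(n))² e^{−|n|}, where ⟨f⟩ = (Σ_k f(k) e^{−|k|}) / (Σ_k e^{−|k|}). -/
/-!
The weighted mean minimizes `a ↦ ∑ₖ (f k - a)² w k`, so it suffices to bound the deviation from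
`f 0`. On each half-line `f k - f 0` telescopes, and Cauchy–Schwarz with the weights `r ^ (k - j)`,
where `r = e^{-1/2}`, bounds `(f k - f 0)² e^{-k}` by a geometrically damped convolution of the
increments `(f (j + 1) - f j)² e^{-j}`. Summing over `k` turns this convolution into a Cauchy
product with `∑ rⁱ`, which gives a discrete Hardy inequality on each half-line.
-/

open Finset
open scoped ENNReal

theorem ENNReal.tsum_mul_tsum_eq_tsum_sum_range (f g : ℕ → ℝ≥0∞) :
    (∑' n, f n) * ∑' n, g n = ∑' n, ∑ k ∈ range (n + 1), f k * g (n - k) := by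
  simp_rw [← Nat.sum_antidiagonal_eq_sum_range_succ (fun k l => f k * g l),
    ← ENNReal.tsum_mul_right, ← ENNReal.tsum_mul_left]
  rw [← ENNReal.tsum_prod, ← HasAntidiagonal.sigmaAntidiagonalEquivProd.tsum_eq,
    ENNReal.tsum_sigma']
  simp only [tsum_fintype, Finset.univ_eq_attach]
  exact tsum_congr fun n => sum_attach _ fun kl : ℕ × ℕ => f kl.1 * g kl.2

theorem ENNReal.tsum_int_le_tsum_nat_add_tsum_nat_neg (h : ℤ → ℝ≥0∞) :
    ∑' k, h k ≤ ∑' n : ℕ, h n + ∑' n : ℕ, h (-n) := by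
  rw [tsum_of_nat_of_neg_add_one ENNReal.summable ENNReal.summable]
  gcongr ∑' n : ℕ, h n + ?_
  simpa using ENNReal.tsum_comp_le_tsum_of_injective (add_left_injective 1) fun n : ℕ => h (-n)

theorem hasSum_sq_sub_mul {ι : Type*} {f w : ι → ℝ} {m : ℝ} (a : ℝ) (hw : Summable w)
    (hfw : Summable fun i => f i * w i) (hsq : Summable fun i => (f i - a) ^ 2 * w i)
    (hm : ∑' i, f i * w i = m * ∑' i, w i) :
    HasSum (fun i => (f i - m) ^ 2 * w i)
      (∑' i, (f i - a) ^ 2 * w i - (m - a) ^ 2 * ∑' i, w i) := by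
  have hsplit : (fun i => (f i - m) ^ 2 * w i) = fun i =>
      (f i - a) ^ 2 * w i - 2 * (m - a) * (f i * w i) + (2 * a * (m - a) + (m - a) ^ 2) * w i := by
    ext i; ring
  have hvalue : ∑' i, (f i - a) ^ 2 * w i - (m - a) ^ 2 * ∑' i, w i =
      ∑' i, (f i - a) ^ 2 * w i - 2 * (m - a) * ∑' i, f i * w i +
        (2 * a * (m - a) + (m - a) ^ 2) * ∑' i, w i := by
    rw [hm]; ring
  rw [hsplit, hvalue]
  exact (hsq.hasSum.sub (hfw.hasSum.mul_left _)).add (hw.hasSum.mul_left _)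

theorem tsum_ofReal_sq_sub_mul_le {ι : Type*} {f w : ι → ℝ} {m : ℝ} (hw0 : ∀ i, 0 ≤ w i)
    (hw : Summable w) (hfw : Summable fun i => f i * w i) (hm : ∑' i, f i * w i = m * ∑' i, w i)
    (a : ℝ) :
    ∑' i, ENNReal.ofReal ((f i - m) ^ 2 * w i) ≤ ∑' i, ENNReal.ofReal ((f i - a) ^ 2 * w i) := by
  have hnonneg : ∀ c i, 0 ≤ (f i - c) ^ 2 * w i := fun c i => mul_nonneg (sq_nonneg _) (hw0 i)
  by_cases htop : ∑' i, ENNReal.ofReal ((f i - a) ^ 2 * w i) = ∞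
  · exact htop ▸ le_top
  have hsq : Summable fun i => (f i - a) ^ 2 * w i :=
    (ENNReal.summable_toReal htop).congr fun i => ENNReal.toReal_ofReal (hnonneg a i)
  have hmean := hasSum_sq_sub_mul a hw hfw hsq hm
  rw [← ENNReal.ofReal_tsum_of_nonneg (hnonneg m) hmean.summable, hmean.tsum_eq,
    ← ENNReal.ofReal_tsum_of_nonneg (hnonneg a) hsq]
  exact ENNReal.ofReal_le_ofReal (sub_le_self _ (mul_nonneg (sq_nonneg _) (tsum_nonneg hw0)))

theorem sum_range_pow_sub_le {r : ℝ} (hr0 : 0 ≤ r) (hr1 : r < 1) (k : ℕ) :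
    ∑ j ∈ range k, r ^ (k - j) ≤ r / (1 - r) := by
  have hreflect : ∑ j ∈ range k, r ^ (k - j) = ∑ i ∈ Ico 1 (k + 1), r ^ i := by
    rw [sum_Ico_eq_sum_range, Nat.add_sub_cancel, ← sum_range_reflect]
    exact sum_congr rfl fun j hj => by rw [mem_range] at hj; congr 1; omega
  simpa [hreflect] using geom_sum_Ico_le_of_lt_one (m := 1) (n := k + 1) hr0 hr1

theorem sq_sub_mul_pow_le_sum (u : ℕ → ℝ) {r : ℝ} (hr0 : 0 ≤ r) (hr1 : r < 1) (k : ℕ) :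
    (u k - u 0) ^ 2 * r ^ (2 * k) ≤
      r / (1 - r) * ∑ j ∈ range (k + 1), (u (j + 1) - u j) ^ 2 * r ^ (2 * j) * r ^ (k - j) := by
  set g : ℕ → ℝ := fun j => (u (j + 1) - u j) ^ 2 * r ^ (2 * j) * r ^ (k - j)
  have hg : ∀ j, 0 ≤ g j := fun j => by positivity
  have hcs : (∑ j ∈ range k, (u (j + 1) - u j) * r ^ k) ^ 2 ≤
      (∑ j ∈ range k, r ^ (k - j)) * ∑ j ∈ range k, g j := by
    refine sum_sq_le_sum_mul_sum_of_sq_le_mul _ (fun j _ => by positivity) (fun j _ => hg j)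
      fun j hj => le_of_eq ?_
    have hjk : k - j + (2 * j + (k - j)) = 2 * k := by rw [mem_range] at hj; omega
    simp only [g]
    rw [mul_pow, ← pow_mul', ← hjk, pow_add, pow_add]
    ring
  calc (u k - u 0) ^ 2 * r ^ (2 * k)
      = (∑ j ∈ range k, (u (j + 1) - u j) * r ^ k) ^ 2 := by
        rw [← sum_mul, sum_range_sub, mul_pow, pow_mul, ← pow_mul, ← pow_mul, mul_comm k]
    _ ≤ (∑ j ∈ range k, r ^ (k - j)) * ∑ j ∈ range k, g j := hcs
    _ ≤ r / (1 - r) * ∑ j ∈ range (k + 1), g j := by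
        refine mul_le_mul (sum_range_pow_sub_le hr0 hr1 k) ?_ (sum_nonneg fun j _ => hg j)
          (div_nonneg hr0 (sub_nonneg.2 hr1.le))
        rw [sum_range_succ]
        exact le_add_of_nonneg_right (hg k)

theorem tsum_ofReal_sq_sub_mul_pow_le (u : ℕ → ℝ) {r : ℝ} (hr0 : 0 ≤ r) (hr1 : r < 1) :
    ∑' k, ENNReal.ofReal ((u k - u 0) ^ 2 * r ^ (2 * k)) ≤
      ENNReal.ofReal (r / (1 - r) ^ 2) *
        ∑' j, ENNReal.ofReal ((u (j + 1) - u j) ^ 2 * r ^ (2 * j)) := by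
  set a : ℕ → ℝ≥0∞ := fun j => ENNReal.ofReal ((u (j + 1) - u j) ^ 2 * r ^ (2 * j))
  set b : ℕ → ℝ≥0∞ := fun i => ENNReal.ofReal (r ^ i)
  have hb : ∑' i, b i = ENNReal.ofReal (1 - r)⁻¹ := by
    rw [← ENNReal.ofReal_tsum_of_nonneg (fun i => pow_nonneg hr0 i)
      (summable_geometric_of_lt_one hr0 hr1), tsum_geometric_of_lt_one hr0 hr1]
  have hpointwise : ∀ k, ENNReal.ofReal ((u k - u 0) ^ 2 * r ^ (2 * k)) ≤
      ENNReal.ofReal (r / (1 - r)) * ∑ j ∈ range (k + 1), a j * b (k - j) := fun k => by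
    refine (ENNReal.ofReal_le_ofReal (sq_sub_mul_pow_le_sum u hr0 hr1 k)).trans_eq ?_
    rw [ENNReal.ofReal_mul (div_nonneg hr0 (sub_nonneg.2 hr1.le)),
      ENNReal.ofReal_sum_of_nonneg fun j _ => by positivity]
    exact congrArg _ (sum_congr rfl fun j _ => ENNReal.ofReal_mul (by positivity))
  calc ∑' k, ENNReal.ofReal ((u k - u 0) ^ 2 * r ^ (2 * k))
      ≤ ∑' k, ENNReal.ofReal (r / (1 - r)) * ∑ j ∈ range (k + 1), a j * b (k - j) :=
        ENNReal.tsum_le_tsum hpointwise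
    _ = ENNReal.ofReal (r / (1 - r)) * ((∑' j, a j) * ∑' i, b i) := by
        rw [ENNReal.tsum_mul_left, ENNReal.tsum_mul_tsum_eq_tsum_sum_range]
    _ = ENNReal.ofReal (r / (1 - r) ^ 2) * ∑' j, a j := by
        rw [hb, mul_comm (∑' j, a j), ← mul_assoc,
          ← ENNReal.ofReal_mul (div_nonneg hr0 (sub_nonneg.2 hr1.le)), div_mul_eq_mul_div,
          ← div_eq_mul_inv, div_div, ← sq]

theorem tsum_ofReal_sq_sub_apply_zero_mul_pow_natAbs_le (f : ℤ → ℝ) {r : ℝ} (hr0 : 0 < r)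
    (hr1 : r < 1) :
    ∑' k : ℤ, ENNReal.ofReal ((f k - f 0) ^ 2 * r ^ (2 * k.natAbs)) ≤
      ENNReal.ofReal (r * (1 - r) ^ 2)⁻¹ *
        ∑' n : ℤ, ENNReal.ofReal ((f (n + 1) - f n) ^ 2 * r ^ (2 * n.natAbs)) := by
  set D : ℤ → ℝ≥0∞ := fun n => ENNReal.ofReal ((f (n + 1) - f n) ^ 2 * r ^ (2 * n.natAbs))
  have hK : r / (1 - r) ^ 2 * (r ^ 2)⁻¹ = (r * (1 - r) ^ 2)⁻¹ := by
    field_simp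
  have hCK : r / (1 - r) ^ 2 ≤ (r * (1 - r) ^ 2)⁻¹ :=
    hK ▸ le_mul_of_one_le_right (by positivity) (one_le_inv₀ (by positivity) |>.2
      (pow_le_one₀ hr0.le hr1.le))
  have hpos : ∑' n : ℕ, ENNReal.ofReal ((f n - f 0) ^ 2 * r ^ (2 * n)) ≤
      ENNReal.ofReal (r * (1 - r) ^ 2)⁻¹ * ∑' n : ℕ, D n := by
    refine (tsum_ofReal_sq_sub_mul_pow_le (fun n => f n) hr0.le hr1).trans
      (mul_le_mul' (ENNReal.ofReal_le_ofReal hCK) (le_of_eq ?_))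
    simp [D]
  -- the step from `-n` to `-(n + 1)` costs one factor of the weight `r ^ 2`
  have hshift : ∀ n : ℕ, ENNReal.ofReal ((f (-(n + 1 : ℕ)) - f (-n)) ^ 2 * r ^ (2 * n)) =
      ENNReal.ofReal (r ^ 2)⁻¹ * D (-(n + 1)) := fun n => by
    rw [← ENNReal.ofReal_mul (by positivity)]
    congr 1
    have : (-(n + 1 : ℤ)).natAbs = n + 1 := by omega
    simp only [this, show -((n : ℤ) + 1) + 1 = -n by ring, Nat.cast_add, Nat.cast_one]
    field_simp
    ring
  have hneg : ∑' n : ℕ, ENNReal.ofReal ((f (-n) - f 0) ^ 2 * r ^ (2 * n)) ≤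
      ENNReal.ofReal (r * (1 - r) ^ 2)⁻¹ * ∑' n : ℕ, D (-(n + 1)) := by
    refine (tsum_ofReal_sq_sub_mul_pow_le (fun n => f (-n)) hr0.le hr1).trans_eq ?_
    simp only [hshift, ENNReal.tsum_mul_left, ← mul_assoc]
    rw [← ENNReal.ofReal_mul (by positivity), hK]
  calc ∑' k : ℤ, ENNReal.ofReal ((f k - f 0) ^ 2 * r ^ (2 * k.natAbs))
      ≤ ∑' n : ℕ, ENNReal.ofReal ((f n - f 0) ^ 2 * r ^ (2 * n)) +
          ∑' n : ℕ, ENNReal.ofReal ((f (-n) - f 0) ^ 2 * r ^ (2 * n)) := by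
        simpa using ENNReal.tsum_int_le_tsum_nat_add_tsum_nat_neg
          fun k => ENNReal.ofReal ((f k - f 0) ^ 2 * r ^ (2 * k.natAbs))
    _ ≤ ENNReal.ofReal (r * (1 - r) ^ 2)⁻¹ * (∑' n : ℕ, D n + ∑' n : ℕ, D (-(n + 1))) := by
        rw [mul_add]; exact add_le_add hpos hneg
    _ = ENNReal.ofReal (r * (1 - r) ^ 2)⁻¹ * ∑' n : ℤ, D n := by
        rw [tsum_of_nat_of_neg_add_one ENNReal.summable ENNReal.summable]

theorem summable_exp_neg_abs_int : Summable fun k : ℤ => Real.exp (-|(k : ℝ)|) :=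
  summable_int_iff_summable_nat_and_neg.mpr
    ⟨by simpa using Real.summable_exp_neg_nat, by simpa using Real.summable_exp_neg_nat⟩

/-- Weighted Poincaré inequality on ℤ with exponential weight `g k = exp (-|k|)`. -/
theorem weighted_poincare_int :
    ∃ c : ℝ, 0 < c ∧ ∀ f : ℤ → ℝ,
      Summable (fun k : ℤ => f k * Real.exp (-|(k : ℝ)|)) →
      (∑' k : ℤ,
          ENNReal.ofReal
            ((f k - (∑' j : ℤ, f j * Real.exp (-|(j : ℝ)|)) /
                (∑' j : ℤ, Real.exp (-|(j : ℝ)|))) ^ 2 * Real.exp (-|(k : ℝ)|)))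
        ≤ ENNReal.ofReal c *
            ∑' n : ℤ, ENNReal.ofReal ((f (n + 1) - f n) ^ 2 * Real.exp (-|(n : ℝ)|)) := by
  set r := Real.exp (-1 / 2)
  have hr0 : 0 < r := Real.exp_pos _
  have hr1 : r < 1 := Real.exp_lt_one_iff.mpr (by norm_num)
  have hweight : ∀ k : ℤ, Real.exp (-|(k : ℝ)|) = r ^ (2 * k.natAbs) := fun k => by
    rw [← Real.exp_nat_mul, Nat.cast_mul, Nat.cast_natAbs, Int.cast_abs]
    ring_nf
  have hmass : 0 < ∑' j : ℤ, Real.exp (-|(j : ℝ)|) :=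
    summable_exp_neg_abs_int.tsum_pos (fun _ => (Real.exp_pos _).le) 0 (Real.exp_pos _)
  refine ⟨(r * (1 - r) ^ 2)⁻¹, by have := sub_pos.2 hr1; positivity, fun f hf => ?_⟩
  calc _ ≤ ∑' k : ℤ, ENNReal.ofReal ((f k - f 0) ^ 2 * Real.exp (-|(k : ℝ)|)) :=
        tsum_ofReal_sq_sub_mul_le (fun _ => (Real.exp_pos _).le) summable_exp_neg_abs_int hf
          (div_mul_cancel₀ _ hmass.ne').symm (f 0)
    _ ≤ _ := by
        simpa only [hweight] using tsum_ofReal_sq_sub_apply_zero_mul_pow_natAbs_le f hr0 hr1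
end

section
/- Time reversal identity for a symmetric Markov chain: let p(t,x,y) be a symmetric transition kernel (p(t,x,y) = p(t,y,x)) on a countable state space satisfying the Chapman–Kolmogorov equations, and fix t > 0 and a set C. Then for the associated Markov process Y, P^x(Y_t = y, S_C ∈ [t/2, t]) = P^y(Y_t = x, T_C ≤ t/2), where T_C = inf{s ≥ 0 : Y_s ∈ C} and S_C = sup{s ≤ t : Y_s ∈ C}. -/
/-!
For finitely many times `0 < τ₀ < ⋯ < τₖ < t`, the probability under `P x` of visiting `C` at some
`τᵢ` and sitting at `y` at time `t` is a sum, over discrete paths, of products of transition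
densities. Symmetry of `p` makes each product invariant under running the path backwards with
`τᵢ` replaced by `t - τᵢ`, which proves the identity for finite sets of times and, by continuity
from below, for countable ones. Since paths are right-locally constant, visits during `[t/2, t)`
and `[0, t/2]` are detected on the countable grid of rational times together with `t/2`.

A visit at time `t` itself (the case `y ∈ C`) is matched by showing that the path started at `y`
is at `y` right after time `0`: staying at `z ≠ y` on `(0, δ)` has probability at most
`p r y z * p r z z ^ k` for `k + 1` visits at spacing `r`, and `p r y z ^ 2 + p r z z ^ 2 ≤ 1`.
-/

open MeasureTheory Filter Topology Set
open scoped ENNReal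

namespace TimeReversal

variable {E : Type*}

section Weights

variable (p : ℝ → E → E → ℝ)

noncomputable def chainWeight {n : ℕ} (τ : Fin (n + 1) → ℝ) (z : Fin (n + 1) → E) : ℝ≥0∞ :=
  ∏ i : Fin n, ENNReal.ofReal (p (τ i.succ - τ i.castSucc) (z i.castSucc) (z i.succ))

lemma chainWeight_snoc {n : ℕ} (τ : Fin (n + 2) → ℝ) (z : Fin (n + 1) → E) (w : E) :
    chainWeight p τ (Fin.snoc z w) = chainWeight p (Fin.init τ) z *
      ENNReal.ofReal (p (τ (Fin.last _) - τ (Fin.last n).castSucc) (z (Fin.last n)) w) := by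
  simp only [chainWeight, Fin.prod_univ_castSucc, Fin.init, Fin.succ_castSucc, Fin.snoc_castSucc,
    Fin.succ_last, Fin.snoc_last]

lemma chainWeight_rev (hsymm : ∀ t x y, p t x y = p t y x) {n : ℕ} (c : ℝ)
    (τ : Fin (n + 1) → ℝ) (z : Fin (n + 1) → E) :
    chainWeight p (fun i => c - τ i.rev) (fun i => z i.rev) = chainWeight p τ z := by
  rw [chainWeight, ← Equiv.prod_comp (Fin.revPerm : Equiv.Perm (Fin n))]
  refine Finset.prod_congr rfl fun i _ => ?_
  simp only [Fin.revPerm_apply, Fin.rev_succ, Fin.rev_castSucc, Fin.rev_rev,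
    sub_sub_sub_cancel_left]
  rw [hsymm]

noncomputable def bridgeWeight (T : ℝ) (a b : E) {k : ℕ} (τ : Fin (k + 1) → ℝ)
    (z : Fin (k + 1) → E) : ℝ≥0∞ :=
  ENNReal.ofReal (p (τ 0) a (z 0)) * chainWeight p τ z *
    ENNReal.ofReal (p (T - τ (Fin.last k)) (z (Fin.last k)) b)

lemma bridgeWeight_rev (hsymm : ∀ t x y, p t x y = p t y x) (T : ℝ) (a b : E) {k : ℕ}
    (τ : Fin (k + 1) → ℝ) (z : Fin (k + 1) → E) :
    bridgeWeight p T a b τ (fun i => z i.rev) = bridgeWeight p T b a (fun i => T - τ i.rev) z := by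
  have hchain := chainWeight_rev p hsymm T (fun i => T - τ i.rev) z
  simp only [Fin.rev_rev, sub_sub_cancel] at hchain
  simp only [bridgeWeight, hchain, Fin.rev_zero, Fin.rev_last, sub_sub_cancel]
  rw [hsymm _ a, hsymm _ _ b]
  ring

end Weights

section Kernel

variable [MeasurableSpace E] (P : E → Measure (ℝ → E)) (p : ℝ → E → E → ℝ)
  (hnonneg : ∀ t x y, 0 ≤ p t x y)
  (hsymm : ∀ t x y, p t x y = p t y x)
  (hCK : ∀ s t : ℝ, 0 < s → 0 < t → ∀ x y : E, p (s + t) x y = ∑' z : E, p s x z * p t z y)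
  (hfd : ∀ (x : E) (n : ℕ) (ts : Fin (n + 1) → ℝ) (zs : Fin (n + 1) → E),
      StrictMono ts → 0 < ts 0 →
      P x {ω | ∀ i, ω (ts i) = zs i}
        = ENNReal.ofReal (p (ts 0) x (zs 0) *
            ∏ i : Fin n, p (ts i.succ - ts i.castSucc) (zs i.castSucc) (zs i.succ)))

include hfd in
lemma measure_eval_eq (a b : E) {r : ℝ} (hr : 0 < r) :
    P a {ω | ω r = b} = ENNReal.ofReal (p r a b) := by
  simpa using hfd a 0 (fun _ => r) (fun _ => b) (Subsingleton.strictMono (α := Fin 1) _) hr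

include hfd in
lemma kernel_le_one [∀ x, IsProbabilityMeasure (P x)] (a b : E) {r : ℝ} (hr : 0 < r) :
    p r a b ≤ 1 := by
  rw [← ENNReal.ofReal_le_one, ← measure_eval_eq P p hfd a b hr]
  exact prob_le_one

include hnonneg hfd in
lemma measure_cylinder (x : E) {n : ℕ} (ts : Fin (n + 1) → ℝ) (zs : Fin (n + 1) → E)
    (hts : StrictMono ts) (h0 : 0 < ts 0) :
    P x {ω | ∀ i, ω (ts i) = zs i} = ENNReal.ofReal (p (ts 0) x (zs 0)) * chainWeight p ts zs := by
  rw [hfd x n ts zs hts h0, ENNReal.ofReal_mul (hnonneg _ _ _), chainWeight,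
    ENNReal.ofReal_prod_of_nonneg fun i _ => hnonneg _ _ _]

include hfd in
lemma measure_eval_eval_eq (a z b : E) {s u : ℝ} (hs : 0 < s) (hu : 0 < u) :
    P a {ω | ω s = z ∧ ω (s + u) = b} = ENNReal.ofReal (p s a z * p u z b) := by
  simpa [Fin.forall_fin_two] using hfd a 1 ![s, s + u] ![z, b]
    (by simpa [Fin.strictMono_iff_lt_succ] using hu) (by simpa using hs)

include hnonneg hCK hfd in
lemma summable_kernel_mul (a b : E) {s u : ℝ} (hs : 0 < s) (hu : 0 < u) :
    Summable fun z => p s a z * p u z b := by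
  by_contra hns
  have hzero : p (s + u) a b = 0 := by
    rw [hCK s u hs hu]; exact tsum_eq_zero_of_not_summable hns
  refine hns (summable_zero.congr fun z => (le_antisymm ?_ ?_).symm)
  · have hle : P a {ω | ω s = z ∧ ω (s + u) = b} ≤ P a {ω | ω (s + u) = b} :=
      measure_mono fun ω h => h.2
    rwa [measure_eval_eval_eq P p hfd a z b hs hu, measure_eval_eq P p hfd a b (add_pos hs hu),
      hzero, ENNReal.ofReal_zero, nonpos_iff_eq_zero, ENNReal.ofReal_eq_zero] at hle
  · exact mul_nonneg (hnonneg _ _ _) (hnonneg _ _ _)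

include hnonneg hCK hfd in
lemma tsum_ofReal_mul_ofReal (a b : E) {s u : ℝ} (hs : 0 < s) (hu : 0 < u) :
    ∑' z, ENNReal.ofReal (p s a z) * ENNReal.ofReal (p u z b) = ENNReal.ofReal (p (s + u) a b) := by
  rw [hCK s u hs hu, ENNReal.ofReal_tsum_of_nonneg
    (fun z => mul_nonneg (hnonneg _ _ _) (hnonneg _ _ _))
    (summable_kernel_mul P p hnonneg hCK hfd a b hs hu)]
  exact tsum_congr fun z => (ENNReal.ofReal_mul (hnonneg _ _ _)).symm

include hnonneg hsymm hCK hfd in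
lemma sq_add_sq_le_one [∀ x, IsProbabilityMeasure (P x)] {y z : E} (hzy : z ≠ y) {r : ℝ}
    (hr : 0 < r) : p r y z ^ 2 + p r z z ^ 2 ≤ 1 := by
  classical
  calc p r y z ^ 2 + p r z z ^ 2 = ∑ w ∈ {y, z}, p r z w * p r w z := by
        rw [Finset.sum_pair hzy.symm, hsymm r z y]; ring
    _ ≤ ∑' w, p r z w * p r w z :=
        (summable_kernel_mul P p hnonneg hCK hfd z z hr hr).sum_le_tsum _
          fun w _ => mul_nonneg (hnonneg _ _ _) (hnonneg _ _ _)
    _ = p (r + r) z z := (hCK r r hr hr z z).symm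
    _ ≤ 1 := kernel_le_one P p hfd z z (add_pos hr hr)

include hnonneg hfd in
lemma measure_bridge_cylinder (a b : E) {T : ℝ} {k : ℕ} (τ : Fin (k + 1) → ℝ) (hτ : StrictMono τ)
    (h0 : 0 < τ 0) (hT : ∀ i, τ i < T) (z : Fin (k + 1) → E) :
    P a {ω | (∀ i, ω (τ i) = z i) ∧ ω T = b} = bridgeWeight p T a b τ z := by
  have hsnoc : StrictMono (Fin.snoc τ T : Fin (k + 2) → ℝ) := by
    refine Fin.strictMono_iff_lt_succ.2 fun i => Fin.lastCases ?_ (fun j => ?_) i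
    · simpa using hT (Fin.last k)
    · rw [Fin.succ_castSucc, Fin.snoc_castSucc, Fin.snoc_castSucc]
      exact hτ Fin.castSucc_lt_succ
  have hset : {ω : ℝ → E | (∀ i, ω (τ i) = z i) ∧ ω T = b} =
      {ω | ∀ i, ω ((Fin.snoc τ T : Fin (k + 2) → ℝ) i) = (Fin.snoc z b : Fin (k + 2) → E) i} := by
    ext ω; simp [Fin.forall_fin_succ']
  rw [hset, measure_cylinder P p hnonneg hfd a _ _ hsnoc (by rwa [Fin.snoc_apply_zero]),
    chainWeight_snoc]
  simp [bridgeWeight, Fin.snoc_apply_zero, mul_assoc]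

include hnonneg hCK hfd in
lemma tsum_bridgeWeight_snoc (a b : E) {T : ℝ} {k : ℕ} (τ : Fin (k + 2) → ℝ) (hτ : StrictMono τ)
    (hT : τ (Fin.last _) < T) (z : Fin (k + 1) → E) :
    ∑' w, bridgeWeight p T a b τ (Fin.snoc z w) = bridgeWeight p T a b (Fin.init τ) z := by
  have hlast : (Fin.init τ) (Fin.last k) = τ (Fin.last k).castSucc := rfl
  simp only [bridgeWeight, Fin.snoc_apply_zero, chainWeight_snoc, Fin.snoc_last, mul_assoc,
    ENNReal.tsum_mul_left]
  rw [tsum_ofReal_mul_ofReal P p hnonneg hCK hfd _ _ (sub_pos.2 (hτ (Fin.castSucc_lt_last _)))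
    (sub_pos.2 hT), hlast, sub_add_sub_cancel']
  rfl

include hnonneg hCK hfd in
lemma tsum_bridgeWeight (a b : E) {T : ℝ} :
    ∀ {k : ℕ} (τ : Fin (k + 1) → ℝ), StrictMono τ → 0 < τ 0 → (∀ i, τ i < T) →
      ∑' z, bridgeWeight p T a b τ z = ENNReal.ofReal (p T a b)
  | 0, τ, _, h0, hT => by
    rw [← (Equiv.funUnique (Fin 1) E).symm.tsum_eq]
    simp only [bridgeWeight, chainWeight, Equiv.funUnique_symm_apply, uniqueElim_const,
      Finset.univ_eq_empty, Finset.prod_empty, mul_one, Fin.last_zero]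
    rw [tsum_ofReal_mul_ofReal P p hnonneg hCK hfd a b h0 (sub_pos.2 (hT 0)), add_sub_cancel]
  | k + 1, τ, hτ, h0, hT => by
    rw [← (Fin.snocEquiv fun _ => E).tsum_eq, ENNReal.tsum_prod', ENNReal.tsum_comm]
    refine (tsum_congr fun z =>
      tsum_bridgeWeight_snoc P p hnonneg hCK hfd a b τ hτ (hT _) z).trans ?_
    exact tsum_bridgeWeight a b (Fin.init τ) (hτ.comp Fin.strictMono_castSucc) h0 fun i => hT _

include hnonneg hfd in
lemma measure_bridge_le [Countable E] (a b : E) {T : ℝ} {k : ℕ} (τ : Fin (k + 1) → ℝ)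
    (hτ : StrictMono τ) (h0 : 0 < τ 0) (hT : ∀ i, τ i < T) (Z : Set (Fin (k + 1) → E)) :
    P a {ω | (fun i => ω (τ i)) ∈ Z ∧ ω T = b} ≤ ∑' z : Z, bridgeWeight p T a b τ z :=
  calc P a {ω | (fun i => ω (τ i)) ∈ Z ∧ ω T = b}
      ≤ P a (⋃ z : Z, {ω | (∀ i, ω (τ i) = (z : Fin (k + 1) → E) i) ∧ ω T = b}) :=
        measure_mono fun _ hω => mem_iUnion.2 ⟨⟨_, hω.1⟩, fun _ => rfl, hω.2⟩
    _ ≤ ∑' z : Z, P a {ω | (∀ i, ω (τ i) = (z : Fin (k + 1) → E) i) ∧ ω T = b} :=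
        measure_iUnion_le _
    _ = ∑' z : Z, bridgeWeight p T a b τ z :=
        tsum_congr fun z => measure_bridge_cylinder P p hnonneg hfd a b τ hτ h0 hT z

include hnonneg hCK hfd in
lemma measure_bridge_mem [Countable E] (a b : E) {T : ℝ} {k : ℕ} (τ : Fin (k + 1) → ℝ)
    (hτ : StrictMono τ) (h0 : 0 < τ 0) (hT : ∀ i, τ i < T) (Z : Set (Fin (k + 1) → E)) :
    P a {ω | (fun i => ω (τ i)) ∈ Z ∧ ω T = b} = ∑' z : Z, bridgeWeight p T a b τ z := by
  refine le_antisymm (measure_bridge_le P p hnonneg hfd a b τ hτ h0 hT Z) ?_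
  set W := bridgeWeight p T a b τ
  -- The sets need not be measurable, so `P a` is only subadditive on them: the upper bound for `Zᶜ`
  -- together with the total mass `p T a b` forces equality.
  have htotal : ∑' z : Z, W z + ∑' z : ↥Zᶜ, W z ≤
      P a {ω | (fun i => ω (τ i)) ∈ Z ∧ ω T = b} + ∑' z : ↥Zᶜ, W z := by
    rw [ENNReal.summable.tsum_add_tsum_compl ENNReal.summable,
      tsum_bridgeWeight P p hnonneg hCK hfd a b τ hτ h0 hT,
      ← measure_eval_eq P p hfd a b (h0.trans (hT 0))]
    calc P a {ω | ω T = b}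
        ≤ P a ({ω | (fun i => ω (τ i)) ∈ Z ∧ ω T = b} ∪ {ω | (fun i => ω (τ i)) ∈ Zᶜ ∧ ω T = b}) :=
          measure_mono fun ω hω => (em _).imp (⟨·, hω⟩) (⟨·, hω⟩)
      _ ≤ _ := measure_union_le _ _
      _ ≤ _ := add_le_add le_rfl (measure_bridge_le P p hnonneg hfd a b τ hτ h0 hT Zᶜ)
  have hfin : ∑' z : ↥Zᶜ, W z ≠ ⊤ := by
    refine ne_top_of_le_ne_top (ENNReal.ofReal_ne_top (r := p T a b)) ?_
    rw [← tsum_bridgeWeight P p hnonneg hCK hfd a b τ hτ h0 hT]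
    exact ENNReal.tsum_comp_le_tsum_of_injective Subtype.val_injective _
  exact (ENNReal.add_le_add_iff_right hfin).1 htotal

include hnonneg hsymm hCK hfd in
lemma measure_bridge_hit_reverse [Countable E] (C : Set E) (a b : E) {t : ℝ} {k : ℕ}
    (τ : Fin (k + 1) → ℝ) (hτ : StrictMono τ) (h0 : 0 < τ 0) (ht : ∀ i, τ i < t) :
    P a {ω | (∃ i, ω (τ i) ∈ C) ∧ ω t = b} = P b {ω | (∃ i, ω (t - τ i) ∈ C) ∧ ω t = a} := by
  set Z : Set (Fin (k + 1) → E) := {z | ∃ i, z i ∈ C}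
  set τ' : Fin (k + 1) → ℝ := fun i => t - τ i.rev
  have hτ' : StrictMono τ' := fun i j h => sub_lt_sub_left (hτ (Fin.rev_lt_rev.2 h)) t
  have hrev : {ω : ℝ → E | (∃ i, ω (t - τ i) ∈ C) ∧ ω t = a} =
      {ω | (fun i => ω (τ' i)) ∈ Z ∧ ω t = a} := by
    ext ω
    exact and_congr_left' Fin.rev_surjective.exists
  let e : Equiv.Perm Z := Function.Involutive.toPerm
    (fun z => ⟨fun i => z.1 i.rev, z.2.elim fun i hi => ⟨i.rev, by simpa using hi⟩⟩)
    fun z => Subtype.ext <| funext fun i => by simp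
  rw [hrev, measure_bridge_mem P p hnonneg hCK hfd b a τ' hτ' (sub_pos.2 (ht _))
    (fun i => sub_lt_self t (h0.trans_le (hτ.monotone (Fin.zero_le _)))) Z]
  refine (measure_bridge_mem P p hnonneg hCK hfd a b τ hτ h0 ht Z).trans ?_
  rw [← e.tsum_eq]
  exact tsum_congr fun z => bridgeWeight_rev p hsymm t a b τ z

include hnonneg hsymm hCK hfd in
lemma measure_hit_reverse_finset [Countable E] (C : Set E) (a b : E) {t : ℝ} (F : Finset ℝ)
    (hF : ↑F ⊆ Ioo 0 t) :
    P a {ω | ω t = b ∧ ∃ s ∈ F, ω s ∈ C} = P b {ω | ω t = a ∧ ∃ s ∈ F, ω (t - s) ∈ C} := by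
  rcases F.eq_empty_or_nonempty with rfl | hne
  · simp
  obtain ⟨k, hk⟩ := Nat.exists_eq_succ_of_ne_zero (Finset.card_ne_zero.2 hne)
  set τ := F.orderEmbOfFin hk
  have hmem : ∀ i, τ i ∈ Ioo 0 t := fun i => hF (F.orderEmbOfFin_mem hk i)
  have hsort : ∀ φ : ℝ → Prop, (∃ s ∈ F, φ s) ↔ ∃ i, φ (τ i) := fun φ =>
    ⟨fun ⟨s, hs, h⟩ => by
      obtain ⟨i, rfl⟩ : s ∈ range τ := by rwa [F.range_orderEmbOfFin hk]
      exact ⟨i, h⟩,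
    fun ⟨i, h⟩ => ⟨_, F.orderEmbOfFin_mem hk i, h⟩⟩
  simp only [hsort, and_comm (a := _ = _)]
  exact measure_bridge_hit_reverse P p hnonneg hsymm hCK hfd C a b τ τ.strictMono (hmem 0).1
    fun i => (hmem i).2

include hnonneg hsymm hCK hfd in
lemma measure_hit_reverse [Countable E] (C : Set E) (a b : E) {t : ℝ} {D : Set ℝ}
    (hD : D.Countable) (hDt : D ⊆ Ioo 0 t) :
    P a {ω | ω t = b ∧ ∃ s ∈ D, ω s ∈ C} = P b {ω | ω t = a ∧ ∃ s ∈ D, ω (t - s) ∈ C} := by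
  have := hD.to_subtype
  let S : Finset D → Finset ℝ := fun F => F.map (Function.Embedding.subtype _)
  have hunion : ∀ (c : E) (φ : ℝ → (ℝ → E) → Prop), {ω | ω t = c ∧ ∃ s ∈ D, φ s ω} =
      ⋃ F : Finset D, {ω | ω t = c ∧ ∃ s ∈ S F, φ s ω} := by
    intro c φ
    ext ω
    constructor
    · rintro ⟨hω, s, hs, h⟩
      exact mem_iUnion.2 ⟨{⟨s, hs⟩}, hω, s, by simp [S], h⟩
    · intro hω
      obtain ⟨F, hω, s, hs, h⟩ := mem_iUnion.1 hω
      obtain ⟨d, -, rfl⟩ := Finset.mem_map.1 hs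
      exact ⟨hω, d, d.2, h⟩
  have hdir : ∀ (c : E) (φ : ℝ → (ℝ → E) → Prop),
      Directed (· ⊆ ·) fun F : Finset D => {ω | ω t = c ∧ ∃ s ∈ S F, φ s ω} := by
    intro c φ
    exact Monotone.directed_le fun F G hFG ω ⟨hω, s, hs, h⟩ =>
      ⟨hω, s, Finset.map_subset_map.2 hFG hs, h⟩
  rw [hunion b (fun s ω => ω s ∈ C), hunion a (fun s ω => ω (t - s) ∈ C),
    (hdir _ _).measure_iUnion, (hdir _ _).measure_iUnion]
  exact iSup_congr fun F => measure_hit_reverse_finset P p hnonneg hsymm hCK hfd C a b (S F)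
    fun s hs => by
      obtain ⟨d, -, rfl⟩ := Finset.mem_map.1 hs
      exact hDt d.2

include hnonneg hfd in
lemma measure_const_at_multiples (y z : E) {r : ℝ} (hr : 0 < r) (k : ℕ) :
    P y {ω | ∀ i : Fin (k + 1), ω (((i : ℝ) + 1) * r) = z} =
      ENNReal.ofReal (p r y z) * ENNReal.ofReal (p r z z) ^ k := by
  have hts : StrictMono fun i : Fin (k + 1) => ((i : ℝ) + 1) * r := fun i j h => by
    have : (i : ℝ) < j := by exact_mod_cast h
    nlinarith
  rw [measure_cylinder P p hnonneg hfd y _ (fun _ => z) hts (by simpa using hr), chainWeight]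
  simp only [Fin.val_zero, Nat.cast_zero, zero_add, one_mul, Fin.val_succ, Fin.val_castSucc,
    Nat.cast_add, Nat.cast_one, ← sub_mul, add_sub_cancel_left,
    Finset.prod_const, Finset.card_univ, Fintype.card_fin]

include hnonneg hsymm hCK hfd in
lemma measure_forall_Ioo_eq_eq_zero [∀ x, IsProbabilityMeasure (P x)] {y z : E} (hzy : z ≠ y)
    {δ : ℝ} (hδ : 0 < δ) : P y {ω | ∀ q ∈ Ioo 0 δ, ω q = z} = 0 := by
  set H := {ω : ℝ → E | ∀ q ∈ Ioo 0 δ, ω q = z}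
  set c := (P y H).toReal
  have hc0 : 0 ≤ c := ENNReal.toReal_nonneg
  have hbound : ∀ k : ℕ, c ^ 2 ≤ (1 - c ^ 2) ^ k := by
    intro k
    set r := δ / (k + 2)
    have hr : 0 < r := by positivity
    have hsub : H ⊆ {ω | ∀ i : Fin (k + 1), ω (((i : ℝ) + 1) * r) = z} := by
      refine fun ω hω i => hω _ ⟨by positivity, ?_⟩
      have hi : (i : ℝ) + 1 < k + 2 := by
        have : (i : ℝ) ≤ k := by exact_mod_cast Nat.le_of_lt_succ i.2
        linarith
      calc ((i : ℝ) + 1) * r < (k + 2) * r := mul_lt_mul_of_pos_right hi hr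
        _ = δ := by simp only [r]; field_simp
    have hle : c ≤ p r y z * p r z z ^ k := by
      have h := (measure_mono hsub).trans_eq (measure_const_at_multiples P p hnonneg hfd y z hr k)
      rw [← ENNReal.ofReal_pow (hnonneg _ _ _), ← ENNReal.ofReal_mul (hnonneg _ _ _)] at h
      exact ENNReal.toReal_le_of_le_ofReal (by positivity [hnonneg r y z, hnonneg r z z]) h
    have ha := kernel_le_one P p hfd y z hr
    have hb := kernel_le_one P p hfd z z hr
    have hsq := sq_add_sq_le_one P p hnonneg hsymm hCK hfd hzy hr
    have hca : c ≤ p r y z :=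
      hle.trans (mul_le_of_le_one_right (hnonneg _ _ _) (pow_le_one₀ (hnonneg _ _ _) hb))
    have hcb : c ≤ p r z z ^ k :=
      hle.trans (mul_le_of_le_one_left (pow_nonneg (hnonneg _ _ _) _) ha)
    calc c ^ 2 ≤ (p r z z ^ k) ^ 2 := pow_le_pow_left₀ hc0 hcb 2
      _ = (p r z z ^ 2) ^ k := by ring
      _ ≤ (1 - c ^ 2) ^ k := pow_le_pow_left₀ (sq_nonneg _) (by nlinarith) k
  have hc : c = 0 := by
    by_contra hne
    have hpos : 0 < c ^ 2 := by positivity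
    obtain ⟨k, hk⟩ := exists_pow_lt_of_lt_one hpos (by linarith : 1 - c ^ 2 < 1)
    exact (hbound k).not_gt hk
  exact ((ENNReal.toReal_eq_zero_iff _).1 hc).resolve_right (measure_ne_top _ _)

include hnonneg hsymm hCK hfd in
lemma ae_eventually_eq_start [Countable E] [∀ x, IsProbabilityMeasure (P x)] (y : E)
    (hlim : ∀ᵐ ω ∂P y, ∃ z, ∀ᶠ q in 𝓝[>] (0 : ℝ), ω q = z) :
    ∀ᵐ ω ∂P y, ∀ᶠ q in 𝓝[>] (0 : ℝ), ω q = y := by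
  have hnull : ∀ᵐ ω ∂P y, ∀ z, ∀ n : ℕ, z ≠ y → ¬ ∀ q ∈ Ioo (0 : ℝ) (1 / (n + 1)), ω q = z := by
    refine ae_all_iff.2 fun z => ae_all_iff.2 fun n => ?_
    by_cases hzy : z = y
    · exact Eventually.of_forall fun _ h => (h hzy).elim
    · filter_upwards [measure_eq_zero_iff_ae_notMem.1 (measure_forall_Ioo_eq_eq_zero P p hnonneg
        hsymm hCK hfd hzy (by positivity : (0 : ℝ) < 1 / (n + 1)))] with ω hω _ using hω
  filter_upwards [hlim, hnull] with ω ⟨z, hz⟩ hnull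
  obtain ⟨ε, hε, hεz⟩ := (nhdsGT_basis 0).eventually_iff.1 hz
  obtain ⟨n, hn⟩ := exists_nat_one_div_lt hε
  by_cases hzy : z = y
  · rwa [← hzy]
  · exact (hnull z n hzy fun q hq => hεz ⟨hq.1, hq.2.trans hn⟩).elim

end Kernel

section Paths

def IsRightLocallyConstant (ω : ℝ → E) : Prop :=
  ∀ s : ℝ, 0 ≤ s → ∃ ε > (0 : ℝ), ∀ u ∈ Ico s (s + ε), ω u = ω s

lemma IsRightLocallyConstant.eventually_eq_zero {ω : ℝ → E} (hω : IsRightLocallyConstant ω) :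
    ∀ᶠ q in 𝓝[>] (0 : ℝ), ω q = ω 0 := by
  obtain ⟨ε, hε, hconst⟩ := hω 0 le_rfl
  exact eventually_of_mem (Ioo_mem_nhdsGT (lt_add_of_pos_right 0 hε))
    fun q hq => hconst q (Ioo_subset_Ico_self hq)

/-- After the reflection `s ↦ t - s`, the point `t / 2` is the only grid time that sees a visit at
exactly `t / 2`. -/
def timeGrid (t : ℝ) : Set ℝ := insert (t / 2) (Ioo (t / 2) t ∩ range ((↑) : ℚ → ℝ))

lemma countable_timeGrid (t : ℝ) : (timeGrid t).Countable :=
  ((countable_range _).mono inter_subset_right).insert _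

lemma timeGrid_subset_Ico {t : ℝ} (ht : 0 < t) : timeGrid t ⊆ Ico (t / 2) t := by
  rintro d (rfl | ⟨hd, -⟩)
  · exact ⟨le_rfl, half_lt_self ht⟩
  · exact Ioo_subset_Ico_self hd

lemma exists_timeGrid_mem_Ioo {t a b : ℝ} (ha : t / 2 ≤ a) (hab : a < b) (hb : b ≤ t) :
    ∃ d ∈ timeGrid t, d ∈ Ioo a b := by
  obtain ⟨q, hq⟩ := exists_rat_btwn hab
  exact ⟨q, Or.inr ⟨⟨ha.trans_lt hq.1, hq.2.trans_le hb⟩, q, rfl⟩, hq⟩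

lemma IsRightLocallyConstant.exists_late_iff {ω : ℝ → E} (hω : IsRightLocallyConstant ω)
    {C : Set E} {t : ℝ} (ht : 0 < t) (htC : ω t ∉ C) :
    (∃ s ∈ Icc (t / 2) t, ω s ∈ C) ↔ ∃ s ∈ timeGrid t, ω s ∈ C := by
  refine ⟨fun ⟨s, hs, hsC⟩ => ?_, fun ⟨d, hd, hdC⟩ =>
    ⟨d, Ico_subset_Icc_self (timeGrid_subset_Ico ht hd), hdC⟩⟩
  have hst : s < t := hs.2.lt_of_ne fun h => htC (h ▸ hsC)
  obtain ⟨ε, hε, hconst⟩ := hω s ((half_pos ht).le.trans hs.1)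
  obtain ⟨d, hd, hsd, hdt⟩ :=
    exists_timeGrid_mem_Ioo hs.1 (lt_min (lt_add_of_pos_right s hε) hst) (min_le_right _ t)
  exact ⟨d, hd, by rwa [hconst d ⟨hsd.le, hdt.trans_le (min_le_left _ _)⟩]⟩

lemma IsRightLocallyConstant.exists_early_iff {ω : ℝ → E} (hω : IsRightLocallyConstant ω)
    {C : Set E} {t : ℝ} (ht : 0 < t) :
    (∃ s ∈ Icc 0 (t / 2), ω s ∈ C) ↔ ∃ s ∈ timeGrid t, ω (t - s) ∈ C := by
  refine ⟨fun ⟨s, hs, hsC⟩ => ?_, fun ⟨d, hd, hdC⟩ => ?_⟩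
  · rcases hs.2.eq_or_lt with rfl | hst
    · exact ⟨t / 2, mem_insert _ _, by rwa [sub_half]⟩
    obtain ⟨ε, hε, hconst⟩ := hω s hs.1
    obtain ⟨d, hd, hd1, hd2⟩ := exists_timeGrid_mem_Ioo (le_max_left (t / 2) (t - s - ε))
      (max_lt (by linarith) (by linarith)) (by linarith [hs.1] : t - s ≤ t)
    have hmax := le_max_right (t / 2) (t - s - ε)
    exact ⟨d, hd, by rwa [hconst (t - d) ⟨by linarith, by linarith⟩]⟩
  · have hd' := timeGrid_subset_Ico ht hd
    exact ⟨t - d, ⟨by linarith [hd'.2], by linarith [hd'.1]⟩, hdC⟩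

end Paths

end TimeReversal

open TimeReversal

/-- Time reversal identity for a symmetric Markov chain: if the transition
kernel `p` is symmetric and satisfies Chapman–Kolmogorov, and `P x` is the law
of the chain started at `x` (with right-continuous step paths, and
finite-dimensional distributions given by `p`), then the probability of being at
`y` at time `t` having last visited `C` during `[t/2, t]` equals the
probability, started from `y`, of being at `x` at time `t` having first hit `C`
by time `t/2`. -/
theorem time_reversal_identity {E : Type*} [Countable E] [MeasurableSpace E]
    (P : E → Measure (ℝ → E)) [∀ x, IsProbabilityMeasure (P x)]
    (p : ℝ → E → E → ℝ)
    (hnonneg : ∀ t x y, 0 ≤ p t x y)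
    (hsymm : ∀ t x y, p t x y = p t y x)
    (hCK : ∀ s t : ℝ, 0 < s → 0 < t → ∀ x y : E,
      p (s + t) x y = ∑' z : E, p s x z * p t z y)
    (hfd : ∀ (x : E) (n : ℕ) (ts : Fin (n + 1) → ℝ) (zs : Fin (n + 1) → E),
      StrictMono ts → 0 < ts 0 →
      P x {ω | ∀ i, ω (ts i) = zs i}
        = ENNReal.ofReal (p (ts 0) x (zs 0) *
            ∏ i : Fin n, p (ts i.succ - ts i.castSucc) (zs i.castSucc) (zs i.succ)))
    (hstep : ∀ x : E, ∀ᵐ ω ∂(P x), ∀ s : ℝ, 0 ≤ s →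
      ∃ ε > (0 : ℝ), ∀ u ∈ Set.Ico s (s + ε), ω u = ω s)
    (C : Set E) (t : ℝ) (ht : 0 < t) (x y : E) :
    P x {ω | ω t = y ∧ ∃ s ∈ Set.Icc (t / 2) t, ω s ∈ C}
      = P y {ω | ω t = x ∧ ∃ s ∈ Set.Icc (0 : ℝ) (t / 2), ω s ∈ C} := by
  by_cases hyC : y ∈ C
  · have hlate : {ω : ℝ → E | ω t = y ∧ ∃ s ∈ Icc (t / 2) t, ω s ∈ C} = {ω | ω t = y} :=
      ext fun ω => ⟨And.left, fun h => ⟨h, t, ⟨half_le_self ht.le, le_rfl⟩, h ▸ hyC⟩⟩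
    have hstart := ae_eventually_eq_start P p hnonneg hsymm hCK hfd y <|
      (hstep y).mono fun ω hω => ⟨ω 0, IsRightLocallyConstant.eventually_eq_zero hω⟩
    have hearly : {ω : ℝ → E | ω t = x ∧ ∃ s ∈ Icc 0 (t / 2), ω s ∈ C} =ᵐ[P y] {ω | ω t = x} := by
      refine eventuallyEq_set.2 (hstart.mono fun ω hω => ?_)
      obtain ⟨q, hqy, hq⟩ := (hω.and (Ioo_mem_nhdsGT (half_pos ht))).exists
      exact ⟨And.left, fun h => ⟨h, q, Ioo_subset_Icc_self hq, hqy ▸ hyC⟩⟩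
    rw [hlate, measure_congr hearly, measure_eval_eq P p hfd x y ht,
      measure_eval_eq P p hfd y x ht, hsymm]
  · have hlate : {ω : ℝ → E | ω t = y ∧ ∃ s ∈ Icc (t / 2) t, ω s ∈ C}
        =ᵐ[P x] {ω | ω t = y ∧ ∃ s ∈ timeGrid t, ω s ∈ C} :=
      eventuallyEq_set.2 <| (hstep x).mono fun ω hω => and_congr_right fun h =>
        IsRightLocallyConstant.exists_late_iff hω ht fun h' => hyC (h ▸ h')
    have hearly : {ω : ℝ → E | ω t = x ∧ ∃ s ∈ Icc 0 (t / 2), ω s ∈ C}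
        =ᵐ[P y] {ω | ω t = x ∧ ∃ s ∈ timeGrid t, ω (t - s) ∈ C} :=
      eventuallyEq_set.2 <| (hstep y).mono fun ω hω => and_congr_right fun _ =>
        IsRightLocallyConstant.exists_early_iff hω ht
    rw [measure_congr hlate, measure_congr hearly]
    exact measure_hit_reverse P p hnonneg hsymm hCK hfd C x y (countable_timeGrid t)
      fun d hd => ⟨(half_pos ht).trans_le (timeGrid_subset_Ico ht hd).1,
        (timeGrid_subset_Ico ht hd).2⟩
end

section
/- Counting lemma for staircase paths: for z ∈ n^{−1}ℤ^d, 1 ≤ i ≤ d, and fixed k ∈ n^{−1}ℤ^d, the number of points x ∈ n^{−1}ℤ^d such that x + n^{−1}𝒫(nk) contains the line segment from z to z + n^{−1}e^i is at most n|k_i|, where 𝒫(k) is the staircase path from 0 to k consisting of axis-parallel segments taken in coordinate order. -/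
/-!
The constraints fix every coordinate of `x` except `x i`, and the condition on `x i` says that
`z i` lies in the half-open segment swept by the `i`-th step, i.e. that `x i` lies in an interval
of length `|k i|` with endpoints in `n⁻¹ℤ`. Such an interval contains `n |k i|` points of `n⁻¹ℤ`.
-/

theorem min_le_and_lt_max_add_iff {G : Type*} [AddCommGroup G] [LinearOrder G]
    [IsOrderedAddMonoid G] {q c w : G} :
    min q (q + c) ≤ w ∧ w < max q (q + c) ↔ q ∈ Set.Ioc (w - max 0 c) (w - min 0 c) := by
  conv_lhs => rw [← add_zero q, add_assoc, zero_add, min_add_add_left, max_add_add_left]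
  rw [Set.mem_Ioc, sub_lt_iff_lt_add, le_sub_iff_add_le]
  exact and_comm

theorem intCast_div_min_le_and_lt_max_add_iff {n : ℕ} (hn : 0 < n) {a m Z : ℤ} :
    (min ((a : ℚ) / n) (a / n + m / n) ≤ Z / n ∧ (Z : ℚ) / n < max ((a : ℚ) / n) (a / n + m / n))
      ↔ a ∈ Set.Ioc (Z - max 0 m) (Z - min 0 m) := by
  have hn' : (0 : ℚ) < n := by exact_mod_cast hn
  rw [← add_div, min_div_div_right hn'.le, max_div_div_right hn'.le,
    div_le_div_iff_of_pos_right hn', div_lt_div_iff_of_pos_right hn', ← min_le_and_lt_max_add_iff]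
  norm_cast

theorem eq_update_of_staircase {ι G : Type*} [LinearOrder ι] [AddGroup G] {i : ι}
    {x k z : ι → G} (hlt : ∀ l, l < i → x l + k l = z l) (hgt : ∀ l, i < l → x l = z l) :
    x = Function.update (fun j => if j < i then z j - k j else z j) i (x i) := by
  funext j
  rcases lt_trichotomy j i with h | rfl | h
  · rw [Function.update_of_ne h.ne, if_pos h, ← hlt j h, add_sub_cancel_right]
  · rw [Function.update_self]
  · rw [Function.update_of_ne h.ne', if_neg h.not_gt, hgt j h]

/-- Counting lemma for staircase paths: for fixed `z, k ∈ n⁻¹ℤ^d` and a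
coordinate `i`, the set of points `x ∈ n⁻¹ℤ^d` such that `x + n⁻¹𝒫(nk)`
contains the segment from `z` to `z + n⁻¹eⁱ` — equivalently,
`(x+k)_l = z_l` for `l < i`, `x_l = z_l` for `l > i`, and
`z_i ∈ [min(x_i, (x+k)_i), max(x_i, (x+k)_i))` — has cardinality at most
`n |k_i|`. -/
theorem staircase_counting (d n : ℕ) (hn : 0 < n) (i : Fin d)
    (k z : Fin d → ℚ)
    (hk : ∀ j, ∃ m : ℤ, k j = (m : ℚ) / n)
    (hz : ∀ j, ∃ m : ℤ, z j = (m : ℚ) / n) :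
    Set.Finite {x : Fin d → ℚ |
        (∀ j, ∃ m : ℤ, x j = (m : ℚ) / n) ∧
        (∀ l, l < i → x l + k l = z l) ∧
        (∀ l, i < l → x l = z l) ∧
        min (x i) (x i + k i) ≤ z i ∧ z i < max (x i) (x i + k i)} ∧
      (Nat.card {x : Fin d → ℚ |
        (∀ j, ∃ m : ℤ, x j = (m : ℚ) / n) ∧
        (∀ l, l < i → x l + k l = z l) ∧
        (∀ l, i < l → x l = z l) ∧
        min (x i) (x i + k i) ≤ z i ∧ z i < max (x i) (x i + k i)} : ℚ)
        ≤ (n : ℚ) * |k i| := by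
  obtain ⟨m, hm⟩ := hk i
  obtain ⟨Z, hZ⟩ := hz i
  set T := Finset.Ioc (Z - max 0 m) (Z - min 0 m)
  set e : ℤ → Fin d → ℚ :=
    fun t => Function.update (fun j => if j < i then z j - k j else z j) i ((t : ℚ) / n)
  have hsub : {x : Fin d → ℚ |
        (∀ j, ∃ m : ℤ, x j = (m : ℚ) / n) ∧
        (∀ l, l < i → x l + k l = z l) ∧
        (∀ l, i < l → x l = z l) ∧
        min (x i) (x i + k i) ≤ z i ∧ z i < max (x i) (x i + k i)} ⊆ e '' T := by
    rintro x ⟨hx, hlt, hgt, hxi⟩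
    obtain ⟨a, ha⟩ := hx i
    rw [ha, hm, hZ] at hxi
    refine ⟨a, by simpa [T] using (intCast_div_min_le_and_lt_max_add_iff hn).1 hxi, ?_⟩
    rw [eq_update_of_staircase hlt hgt, ha]
  have hT : (T.card : ℤ) = |m| := by
    rw [Int.card_Ioc, sub_sub_sub_cancel_left, max_sub_min_eq_abs, sub_zero,
      Int.toNat_of_nonneg (abs_nonneg m)]
  have hscale : (n : ℚ) * |k i| = T.card := by
    have hn' : (n : ℚ) ≠ 0 := by exact_mod_cast hn.ne'
    rw [hm, abs_div, Nat.abs_cast, mul_div_cancel₀ _ hn', ← Int.cast_abs, ← hT, Int.cast_natCast]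
  have hfin : (e '' T).Finite := T.finite_toSet.image e
  refine ⟨hfin.subset hsub, ?_⟩
  rw [hscale, Nat.cast_le, ← Set.ncard_coe_finset]
  exact (Nat.card_mono hfin hsub).trans (Nat.card_coe_set_eq _ ▸ Set.ncard_image_le T.finite_toSet)
end
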